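/- Let T be a finite tree having a pendant path P_2, i.e., there exist adjacent vertices u and v of T with deg(u) = 1 and deg(v) = 2, and let s be a nonzero real number. Then λ_max(M_T(s)) > 1 + s^2. -/

import Mathlib

open scoped Classical
open Matrix Polynomial

/-- The deformed Laplacian matrix `M_G(s) = I - s·A(G) + s²·(D(G) - I)` of a finite
simple graph `G`. -/
noncomputable def deformedLap {V : Type*} [Fintype V] (G : SimpleGraph V) (s : ℝ) :
    Matrix V V ℝ :=
  1 - s • G.adjMatrix ℝ + s ^ 2 • (Matrix.diagonal (fun v => (G.degree v : ℝ)) - 1)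

/-- The largest (real) eigenvalue of a matrix: the supremum of its real spectrum.
For a real symmetric matrix this is the maximal eigenvalue (the paper's `ρ`). -/
noncomputable def lamMax {n : Type*} [Fintype n] (M : Matrix n n ℝ) : ℝ :=
  sSup (spectrum ℝ M)

/-!
Test the Rayleigh quotient of `M_T(s)` on the vector `x = e_u - s e_v` supported on the pendant
path. Since `deg u = 1` and `deg v = 2`, only the entries `M_uu = 1`, `M_uv = M_vu = -s` and
`M_vv = 1 + s²` matter, giving `xᵀ M x = (1 + s²)² + s²` and `xᵀ x = 1 + s²`. The Rayleigh
quotient is therefore `1 + s² + s² / (1 + s²) > 1 + s²`, and it bounds `λ_max` from below.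
-/

open scoped MatrixOrder in
theorem Matrix.IsHermitian.dotProduct_mulVec_le_of_spectrum_le {n : Type*} [Fintype n]
    [DecidableEq n] {M : Matrix n n ℝ} (hM : M.IsHermitian) {r : ℝ} (hr : ∀ μ ∈ spectrum ℝ M, μ ≤ r)
    (x : n → ℝ) : x ⬝ᵥ (M *ᵥ x) ≤ r * (x ⬝ᵥ x) := by
  have hpsd : (algebraMap ℝ _ r - M).PosSemidef :=
    Matrix.le_iff.mp (le_algebraMap_of_spectrum_le hr hM.isSelfAdjoint)
  have := hpsd.dotProduct_mulVec_nonneg x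
  simp only [star_trivial, sub_mulVec, dotProduct_sub, Algebra.algebraMap_eq_smul_one, smul_mulVec,
    one_mulVec, dotProduct_smul, smul_eq_mul] at this
  linarith

theorem le_lamMax {n : Type*} [Fintype n] {M : Matrix n n ℝ} {μ : ℝ} (hμ : μ ∈ spectrum ℝ M) :
    μ ≤ lamMax M :=
  le_csSup (Matrix.finite_spectrum M).bddAbove hμ

theorem Matrix.IsHermitian.dotProduct_mulVec_le_lamMax_mul {n : Type*} [Fintype n]
    {M : Matrix n n ℝ} (hM : M.IsHermitian) (x : n → ℝ) :
    x ⬝ᵥ (M *ᵥ x) ≤ lamMax M * (x ⬝ᵥ x) :=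
  hM.dotProduct_mulVec_le_of_spectrum_le (fun _ => le_lamMax) x

theorem Matrix.single_add_single_dotProduct_mulVec {n : Type*} [Fintype n] [DecidableEq n]
    {R : Type*} [CommSemiring R] (M : Matrix n n R) (u v : n) (a b : R) :
    (Pi.single u a + Pi.single v b) ⬝ᵥ (M *ᵥ (Pi.single u a + Pi.single v b)) =
      a * a * M u u + a * b * M u v + b * a * M v u + b * b * M v v := by
  simp only [mulVec_add, add_dotProduct, dotProduct_add, single_dotProduct, mulVec_single,
    Pi.smul_apply, col_apply, MulOpposite.smul_eq_mul_unop, MulOpposite.unop_op]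
  ring

theorem Pi.single_add_single_dotProduct_self {n : Type*} [Fintype n] [DecidableEq n]
    {R : Type*} [CommSemiring R] {u v : n} (huv : u ≠ v) (a b : R) :
    (Pi.single u a + Pi.single v b) ⬝ᵥ (Pi.single u a + Pi.single v b) = a * a + b * b := by
  simp [dotProduct_add, huv, huv.symm]

theorem deformedLap_apply_self {V : Type*} [Fintype V] (G : SimpleGraph V) (s : ℝ) (v : V) :
    deformedLap G s v v = 1 + s ^ 2 * (G.degree v - 1) := by
  simp [deformedLap]

theorem deformedLap_apply_of_adj {V : Type*} [Fintype V] {G : SimpleGraph V} (s : ℝ) {u v : V}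
    (huv : G.Adj u v) : deformedLap G s u v = -s := by
  simp [deformedLap, huv, huv.ne]

theorem deformedLap_isHermitian {V : Type*} [Fintype V] (G : SimpleGraph V) (s : ℝ) :
    (deformedLap G s).IsHermitian := by
  have hA : (G.adjMatrix ℝ).IsHermitian := G.isSymm_adjMatrix
  exact (isHermitian_one.sub (hA.smul (.all s))).add
    (((isHermitian_diagonal _).sub isHermitian_one).smul (.all _))

theorem stmt_9_general {V : Type*} [Fintype V] (T : SimpleGraph V)
    (u v : V) (huv : T.Adj u v) (hu : T.degree u = 1) (hv : T.degree v = 2)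
    (s : ℝ) (hs : s ≠ 0) :
    1 + s ^ 2 < lamMax (deformedLap T s) := by
  set x : V → ℝ := Pi.single u 1 + Pi.single v (-s)
  have hquad : x ⬝ᵥ (deformedLap T s *ᵥ x) = (1 + s ^ 2) * (1 + s ^ 2) + s ^ 2 := by
    rw [single_add_single_dotProduct_mulVec, deformedLap_apply_self, deformedLap_apply_self,
      deformedLap_apply_of_adj s huv, deformedLap_apply_of_adj s huv.symm, hu, hv]
    push_cast
    ring
  have hnorm : x ⬝ᵥ x = 1 + s ^ 2 := by
    rw [Pi.single_add_single_dotProduct_self huv.ne]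
    ring
  have hray := (deformedLap_isHermitian T s).dotProduct_mulVec_le_lamMax_mul x
  rw [hquad, hnorm] at hray
  have hs2 : 0 < s ^ 2 := by positivity
  exact lt_of_mul_lt_mul_right (by linarith) (by positivity : (0 : ℝ) ≤ 1 + s ^ 2)

/-- If a tree `T` has a pendant path `P₂` (adjacent vertices `u, v` with
`deg u = 1`, `deg v = 2`) and `s ≠ 0`, then `λ_max(M_T(s)) > 1 + s²`. -/
theorem stmt_9 {V : Type*} [Fintype V] (T : SimpleGraph V) (hT : T.IsTree)
    (u v : V) (huv : T.Adj u v) (hu : T.degree u = 1) (hv : T.degree v = 2)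
    (s : ℝ) (hs : s ≠ 0) :
    1 + s ^ 2 < lamMax (deformedLap T s) :=
  stmt_9_general T u v huv hu hv s hs
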